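/- arXiv:1310.2437 — 2 statements merged into one kernel-verified Lean document; each statement's English description precedes it below -/
import Mathlib

section
/- For p ∈ X^#, the closure of p̆ = {q ∈ X^# : q ∥ p} is a minimal nonempty closed invariant subset of X^# if and only if for every P ∈ p there exists r ≥ 0 such that p̆ ⊆ (B(P,r))^#, i.e., every ultrafilter parallel to p contains B(P,r). -/
/-!
The key fact is that for `q ∈ X^#`, `p ∈ cl q̆` iff every `P ∈ p` has a neighbourhood `B(P,r)`
in `q`. It follows that `cl p̆ ⊆ X^#` is closed and invariant, and that every closed invariant set
containing `q` contains `cl q̆`. If the condition holds and `S ⊆ cl p̆` is closed, invariant and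
contains `q`, then `q` contains the balls `B(P,r)` (they lie in every member of `p̆`), so
`p ∈ cl q̆ ⊆ S` and `S = cl p̆`. If the condition fails at `P`, compactness of `βX` yields
`q ∈ cl p̆` containing no `B(P,r)`; then `cl q̆` is a closed invariant subset of `cl p̆`
missing `p`.
-/

open Metric Bornology Set

variable {X : Type*} [MetricSpace X]

/-- `B(A,r) = ⋃_{a∈A} B(a,r)` where `B(a,r)` is the closed ball of radius `r`. -/
def ballU (A : Set X) (r : ℝ) : Set X := ⋃ a ∈ A, Metric.closedBall a r

/-- `X^#`: the set of ultrafilters on `X` all of whose members are unbounded. -/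
def sharp (X : Type*) [MetricSpace X] : Set (Ultrafilter X) :=
  {p | ∀ P ∈ p, ¬ Bornology.IsBounded P}

/-- Parallelity: `p ∥ q` iff there is `r ≥ 0` with `B(Q,r) ∈ p` for every `Q ∈ q`. -/
def Par (p q : Ultrafilter X) : Prop :=
  ∃ r : ℝ, 0 ≤ r ∧ ∀ Q ∈ q, ballU Q r ∈ p

/-- `p̆ = {q ∈ X^# : q ∥ p}`. -/
def pbreve (p : Ultrafilter X) : Set (Ultrafilter X) :=
  {q | q ∈ sharp X ∧ Par q p}

/-- The `p`-companion `Δ_p(Y) = {q ∈ X^# : Y ∈ q, q ∥ p}`. -/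
def Delta (p : Ultrafilter X) (Y : Set X) : Set (Ultrafilter X) :=
  {q | q ∈ sharp X ∧ Y ∈ q ∧ Par q p}

/-- A set `S ⊆ X^#` is invariant if `p ∈ S`, `q ∈ X^#`, `q ∥ p` imply `q ∈ S`. -/
def Invt (S : Set (Ultrafilter X)) : Prop :=
  ∀ p ∈ S, ∀ q, q ∈ sharp X → Par q p → q ∈ S

/-- `Y` is large if `X = B(Y,r)` for some `r ≥ 0`. -/
def Large (Y : Set X) : Prop := ∃ r : ℝ, 0 ≤ r ∧ ballU Y r = Set.univ

/-- `Y` is thick if for every `r ≥ 0` there is `y ∈ Y` with `B(y,r) ⊆ Y`. -/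
def Thick (Y : Set X) : Prop := ∀ r : ℝ, 0 ≤ r → ∃ y ∈ Y, Metric.closedBall y r ⊆ Y

/-- `Y` is prethick if `B(Y,r)` is thick for some `r ≥ 0`. -/
def Prethick (Y : Set X) : Prop := ∃ r : ℝ, 0 ≤ r ∧ Thick (ballU Y r)

/-- `Y` is small if `(X∖Y) ∩ L` is large for every large `L`. -/
def SmallSet (Y : Set X) : Prop := ∀ L : Set X, Large L → Large (Yᶜ ∩ L)

/-- `Y` is thin if for each `r ≥ 0` there is a bounded `V` with
`B(y,r) ∩ Y = {y}` for all `y ∈ Y∖V`. -/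
def Thin (Y : Set X) : Prop :=
  ∀ r : ℝ, 0 ≤ r → ∃ V : Set X, Bornology.IsBounded V ∧
    ∀ y ∈ Y \ V, Metric.closedBall y r ∩ Y = {y}

/-- `Y` is `n`-thin if for each `r ≥ 0` there is a bounded `V` with
`|B(y,r) ∩ Y| ≤ n` for all `y ∈ Y∖V`. -/
def NThin (n : ℕ) (Y : Set X) : Prop :=
  ∀ r : ℝ, 0 ≤ r → ∃ V : Set X, Bornology.IsBounded V ∧
    ∀ y ∈ Y \ V, (Metric.closedBall y r ∩ Y).encard ≤ n

/-- `M` is a minimal nonempty closed invariant subset of `X^#`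
(closures/closedness taken in the Stone topology on ultrafilters). -/
def MinCI (M : Set (Ultrafilter X)) : Prop :=
  M ⊆ sharp X ∧ M.Nonempty ∧ IsClosed M ∧ Invt M ∧
    ∀ S ⊆ M, S.Nonempty → IsClosed S → Invt S → S = M

lemma mem_ballU {A : Set X} {r : ℝ} {x : X} : x ∈ ballU A r ↔ ∃ a ∈ A, dist x a ≤ r := by
  simp [ballU, Metric.mem_closedBall]

lemma subset_ballU {A : Set X} {r : ℝ} (hr : 0 ≤ r) : A ⊆ ballU A r := fun x hx =>
  mem_ballU.mpr ⟨x, hx, by simpa using hr⟩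

lemma ballU_mono {A B : Set X} {r s : ℝ} (hAB : A ⊆ B) (hrs : r ≤ s) :
    ballU A r ⊆ ballU B s := fun x hx => by
  obtain ⟨a, ha, hd⟩ := mem_ballU.mp hx
  exact mem_ballU.mpr ⟨a, hAB ha, hd.trans hrs⟩

lemma ballU_ballU_subset {A : Set X} {r s : ℝ} : ballU (ballU A r) s ⊆ ballU A (s + r) := by
  intro x hx
  obtain ⟨b, hb, hxb⟩ := mem_ballU.mp hx
  obtain ⟨a, ha, hba⟩ := mem_ballU.mp hb
  exact mem_ballU.mpr ⟨a, ha, (dist_triangle x b a).trans (add_le_add hxb hba)⟩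

lemma Bornology.IsBounded.ballU {A : Set X} (h : IsBounded A) (r : ℝ) :
    IsBounded (ballU A r) :=
  (h.cthickening (δ := r)).subset <| iUnion₂_subset fun _ ha => closedBall_subset_cthickening ha r

/-- Push `q` forward along a choice of nearby points of `A`. -/
lemma exists_ultrafilter_mem_forall_ballU_mem {q : Ultrafilter X} {A : Set X} {r : ℝ}
    (h : ballU A r ∈ q) : ∃ v : Ultrafilter X, A ∈ v ∧ ∀ Q ∈ q, ballU Q r ∈ v := by
  classical
  obtain ⟨a₀, ha₀, -⟩ := mem_ballU.mp (Filter.nonempty_of_mem h).some_mem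
  let f : X → X := fun x => if hx : ∃ a ∈ A, dist x a ≤ r then hx.choose else a₀
  have hfA : ∀ x, f x ∈ A := fun x => by
    by_cases hx : ∃ a ∈ A, dist x a ≤ r
    · simpa only [f, dif_pos hx] using hx.choose_spec.1
    · simpa only [f, dif_neg hx] using ha₀
  have hfd : ∀ x ∈ ballU A r, dist (f x) x ≤ r := fun x hx => by
    have hx' := mem_ballU.mp hx
    simpa only [f, dif_pos hx', dist_comm] using hx'.choose_spec.2
  refine ⟨q.map f, Ultrafilter.mem_map.mpr (Filter.univ_mem' hfA), fun Q hQ => ?_⟩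
  rw [Ultrafilter.mem_map]
  filter_upwards [hQ, h] with x hxQ hxA
  exact mem_ballU.mpr ⟨x, hxQ, hfd x hxA⟩

lemma ballU_mem_symm {p q : Ultrafilter X} {r : ℝ} (h : ∀ Q ∈ q, ballU Q r ∈ p) :
    ∀ P ∈ p, ballU P r ∈ q := by
  intro P hP
  by_contra hc
  obtain ⟨x, hx, hxP⟩ := Filter.nonempty_of_mem
    (Filter.inter_mem (h _ (Ultrafilter.compl_mem_iff_notMem.mpr hc)) hP)
  obtain ⟨a, ha, hxa⟩ := mem_ballU.mp hx
  exact ha (mem_ballU.mpr ⟨x, hxP, (dist_comm a x).trans_le hxa⟩)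

lemma par_refl (q : Ultrafilter X) : Par q q :=
  ⟨0, le_rfl, fun _ hQ => Filter.mem_of_superset hQ (subset_ballU le_rfl)⟩

lemma Par.symm {p q : Ultrafilter X} (h : Par p q) : Par q p :=
  let ⟨r, hr, h⟩ := h
  ⟨r, hr, ballU_mem_symm h⟩

lemma mem_sharp_of_par {p q : Ultrafilter X} (h : Par q p) (hp : p ∈ sharp X) : q ∈ sharp X := by
  obtain ⟨r, -, h⟩ := h.symm
  exact fun Q hQ hbdd => hp _ (h Q hQ) (hbdd.ballU r)

lemma self_mem_pbreve {p : Ultrafilter X} (hp : p ∈ sharp X) : p ∈ pbreve p :=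
  ⟨hp, par_refl p⟩

lemma isClosed_sharp : IsClosed (sharp X) := by
  have : sharp X = ⋂ (B : Set X) (_ : IsBounded B), {q : Ultrafilter X | Bᶜ ∈ q} := by
    ext q
    simp only [sharp, mem_iInter, mem_ofPred_eq, Ultrafilter.compl_mem_iff_notMem]
    exact ⟨fun h B hB hBq => h B hBq hB, fun h P hPq hP => h P hP hPq⟩
  rw [this]
  exact isClosed_biInter fun B _ => ultrafilter_isClosed_basic Bᶜ

lemma Ultrafilter.mem_closure_iff_forall_mem {α : Type*} {S : Set (Ultrafilter α)}
    {u : Ultrafilter α} : u ∈ closure S ↔ ∀ A ∈ u, ∃ v ∈ S, A ∈ v := by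
  rw [ultrafilterBasis_is_basis.mem_closure_iff]
  constructor
  · intro h A hA
    obtain ⟨v, hvA, hvS⟩ := h _ ⟨A, rfl⟩ hA
    exact ⟨v, hvS, hvA⟩
  · rintro h _ ⟨A, rfl⟩ hA
    obtain ⟨v, hvS, hvA⟩ := h A hA
    exact ⟨v, hvA, hvS⟩

lemma Ultrafilter.mem_of_mem_closure {α : Type*} {S : Set (Ultrafilter α)} {A : Set α}
    {u : Ultrafilter α} (h : ∀ v ∈ S, A ∈ v) (hu : u ∈ closure S) : A ∈ u :=
  closure_minimal h (ultrafilter_isClosed_basic A) hu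

/-- Cantor's intersection theorem for the closed sets `cl S ∩ {q : B(P,n) ∉ q}`, `n ∈ ℕ`. -/
lemma exists_mem_closure_forall_ballU_notMem {S : Set (Ultrafilter X)} {P : Set X}
    (h : ∀ r : ℝ, 0 ≤ r → ∃ q ∈ S, ballU P r ∉ q) :
    ∃ q ∈ closure S, ∀ r : ℝ, 0 ≤ r → ballU P r ∉ q := by
  let t : ℕ → Set (Ultrafilter X) := fun n => closure S ∩ {q | (ballU P n)ᶜ ∈ q}
  have ht_succ : ∀ n, t (n + 1) ⊆ t n := fun n q ⟨hqS, hq⟩ =>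
    ⟨hqS, Filter.mem_of_superset hq <| compl_subset_compl.mpr <|
      ballU_mono subset_rfl (by push_cast; linarith)⟩
  have ht_ne : ∀ n, (t n).Nonempty := fun n => by
    obtain ⟨q, hqS, hq⟩ := h n n.cast_nonneg
    exact ⟨q, subset_closure hqS, Ultrafilter.compl_mem_iff_notMem.mpr hq⟩
  have ht_closed : ∀ n, IsClosed (t n) := fun n =>
    isClosed_closure.inter (ultrafilter_isClosed_basic _)
  obtain ⟨q, hq⟩ := IsCompact.nonempty_iInter_of_sequence_nonempty_isCompact_isClosed t
    ht_succ ht_ne (ht_closed 0).isCompact ht_closed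
  rw [mem_iInter] at hq
  refine ⟨q, (hq 0).1, fun r _ hr => ?_⟩
  have hceil : ballU P r ⊆ ballU P ⌈r⌉₊ := ballU_mono subset_rfl (Nat.le_ceil r)
  exact Ultrafilter.compl_mem_iff_notMem.mp (hq ⌈r⌉₊).2 (q.mem_of_superset hr hceil)

lemma closure_pbreve_subset_sharp (p : Ultrafilter X) : closure (pbreve p) ⊆ sharp X :=
  closure_minimal (fun _ hq => hq.1) isClosed_sharp

lemma mem_closure_pbreve_iff {p q : Ultrafilter X} (hq : q ∈ sharp X) :
    p ∈ closure (pbreve q) ↔ ∀ P ∈ p, ∃ r : ℝ, 0 ≤ r ∧ ballU P r ∈ q := by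
  rw [Ultrafilter.mem_closure_iff_forall_mem]
  refine forall₂_congr fun P _ => ⟨?_, ?_⟩
  · rintro ⟨v, ⟨-, r, hr, hvq⟩, hPv⟩
    exact ⟨r, hr, ballU_mem_symm hvq P hPv⟩
  · rintro ⟨r, hr, hPq⟩
    obtain ⟨v, hPv, hvq⟩ := exists_ultrafilter_mem_forall_ballU_mem hPq
    exact ⟨v, ⟨mem_sharp_of_par ⟨r, hr, hvq⟩ hq, r, hr, hvq⟩, hPv⟩

lemma invt_closure_pbreve {p : Ultrafilter X} (hp : p ∈ sharp X) : Invt (closure (pbreve p)) := by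
  rintro u hu v - ⟨s, hs, hvu⟩
  rw [mem_closure_pbreve_iff hp] at hu ⊢
  intro A hA
  obtain ⟨r, hr, hAp⟩ := hu _ (ballU_mem_symm hvu A hA)
  exact ⟨r + s, add_nonneg hr hs, p.mem_of_superset hAp ballU_ballU_subset⟩

lemma Invt.closure_pbreve_subset {S : Set (Ultrafilter X)} {q : Ultrafilter X} (hS : Invt S)
    (hS_closed : IsClosed S) (hq : q ∈ S) : closure (pbreve q) ⊆ S :=
  closure_minimal (fun v hv => hS q hq v hv.1 hv.2) hS_closed

theorem stmt5_general
    (p : Ultrafilter X) (hp : p ∈ sharp X) :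
    MinCI (closure (pbreve p) ∩ sharp X) ↔
      ∀ P ∈ p, ∃ r : ℝ, 0 ≤ r ∧ ∀ q ∈ pbreve p, ballU P r ∈ q := by
  rw [inter_eq_left.mpr (closure_pbreve_subset_sharp p)]
  have hp_inv := invt_closure_pbreve hp
  constructor
  · rintro ⟨-, -, -, -, hmin⟩
    by_contra! hfail
    obtain ⟨P, hP, hfail⟩ := hfail
    obtain ⟨q, hq, hq_avoid⟩ := exists_mem_closure_forall_ballU_notMem hfail
    have hq_sharp := closure_pbreve_subset_sharp p hq
    have hq_eq : closure (pbreve q) = closure (pbreve p) :=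
      hmin _ (hp_inv.closure_pbreve_subset isClosed_closure hq)
        ⟨q, subset_closure (self_mem_pbreve hq_sharp)⟩ isClosed_closure
        (invt_closure_pbreve hq_sharp)
    have hpq : p ∈ closure (pbreve q) := hq_eq ▸ subset_closure (self_mem_pbreve hp)
    obtain ⟨r, hr, hPq⟩ := (mem_closure_pbreve_iff hq_sharp).mp hpq P hP
    exact hq_avoid r hr hPq
  · intro hcond
    refine ⟨closure_pbreve_subset_sharp p, ⟨p, subset_closure (self_mem_pbreve hp)⟩,
      isClosed_closure, hp_inv, ?_⟩
    rintro S hS ⟨q, hqS⟩ hS_closed hS_inv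
    have hpq : p ∈ closure (pbreve q) := by
      refine (mem_closure_pbreve_iff (closure_pbreve_subset_sharp p (hS hqS))).mpr fun P hP => ?_
      obtain ⟨r, hr, hPr⟩ := hcond P hP
      exact ⟨r, hr, Ultrafilter.mem_of_mem_closure hPr (hS hqS)⟩
    exact hS.antisymm <| hS_inv.closure_pbreve_subset hS_closed <|
      hS_inv.closure_pbreve_subset hS_closed hqS hpq

theorem stmt5 (hX : ¬ Bornology.IsBounded (Set.univ : Set X))
    (p : Ultrafilter X) (hp : p ∈ sharp X) :
    MinCI (closure (pbreve p) ∩ sharp X) ↔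
      ∀ P ∈ p, ∃ r : ℝ, 0 ≤ r ∧ ∀ q ∈ pbreve p, ballU P r ∈ q :=
  stmt5_general p hp
end

section
/- A subset Y of X is thick (for every r ≥ 0 there exists y ∈ Y with B(y,r) ⊆ Y) if and only if there exists p ∈ X^# such that p̆ = Δ_p(Y), i.e., every ultrafilter parallel to p contains Y. -/
open Metric Bornology Set

variable {X : Type*} [MetricSpace X]

/-!
If `Y` is thick, the sets `{y | B(y,r) ⊆ Y}` form a decreasing family of unbounded sets, so some
`p ∈ X^#` contains all of them; any `q ∥ p` then contains `B({y | B(y,r) ⊆ Y}, r) ⊆ Y` for a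
suitable `r`. Conversely, if no ball of radius `r` centred in `Y` lies in `Y`, moving every point
by at most `r` to a point outside `Y` pushes `p` to an ultrafilter `q ∥ p` with `Y ∉ q`.
-/

def ballCore (Y : Set X) (r : ℝ) : Set X := {y | closedBall y r ⊆ Y}

theorem ballCore_antitone (Y : Set X) : Antitone (ballCore Y) :=
  fun _ _ hrs _ hy => (closedBall_subset_closedBall hrs).trans hy

theorem ballU_ballCore_subset (Y : Set X) (r : ℝ) : ballU (ballCore Y r) r ⊆ Y :=
  iUnion₂_subset fun _ hy => hy

theorem ballU_subset_cthickening (A : Set X) (r : ℝ) : ballU A r ⊆ cthickening r A :=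
  iUnion₂_subset fun _ ha => closedBall_subset_cthickening ha r

/-- If `ballCore Y r` were bounded, the far-away centres of larger and larger balls inside `Y`
would still lie in it, and those balls would swallow the `r`-ball around every point. -/
theorem Thick.not_isBounded_ballCore (hX : ¬ IsBounded (univ : Set X)) {Y : Set X}
    (hY : Thick Y) (r : ℝ) : ¬ IsBounded (ballCore Y r) := by
  intro hb
  obtain ⟨c, -, -⟩ := hY 0 le_rfl
  obtain ⟨R, hR, hcore⟩ := hb.subset_closedBall_lt 0 c
  refine hX (hb.subset fun x _ => ?_)
  have hd : 0 ≤ dist x c + R := by positivity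
  obtain ⟨y, -, hy⟩ := hY (max r 0 + (dist x c + R)) (by positivity)
  have hyc : dist y c ≤ R :=
    hcore (ballCore_antitone Y (by linarith [le_max_left r 0]) hy)
  have hxy : dist x y ≤ dist x c + R := by
    linarith [dist_triangle x c y, dist_comm y c]
  refine (closedBall_subset_closedBall' ?_).trans hy
  linarith [le_max_left r 0]

theorem mem_sharp_of_le_cobounded {p : Ultrafilter X} (hp : (p : Filter X) ≤ cobounded X) :
    p ∈ sharp X :=
  fun _ hP hb => Ultrafilter.compl_notMem_iff.2 hP (hp (isBounded_def.1 hb))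

theorem neBot_cobounded_inf_principal {s : Set X} (hs : ¬ IsBounded s) :
    (cobounded X ⊓ Filter.principal s).NeBot :=
  Filter.inf_principal_neBot_iff.2 fun U hU => by
    by_contra hempty
    exact hs ((isBounded_compl_iff.2 hU).subset fun x hx hxU =>
      hempty ⟨x, hxU, hx⟩)

theorem exists_mem_sharp_forall_mem_of_antitone {s : ℝ → Set X} (hs : Antitone s)
    (hunb : ∀ r, ¬ IsBounded (s r)) : ∃ p ∈ sharp X, ∀ r, s r ∈ p := by
  let F : ℝ → Filter X := fun r => cobounded X ⊓ Filter.principal (s r)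
  have hF : Antitone F := fun _ _ hrt => inf_le_inf_left _ (Filter.principal_mono.2 (hs hrt))
  have : (⨅ r, F r).NeBot :=
    Filter.iInf_neBot_of_directed' hF.directed_ge fun r => neBot_cobounded_inf_principal (hunb r)
  have hle : ∀ r, (Ultrafilter.of (⨅ r, F r) : Filter X) ≤ F r :=
    fun r => (Ultrafilter.of_le _).trans (iInf_le F r)
  exact ⟨_, mem_sharp_of_le_cobounded ((hle 0).trans inf_le_left),
    fun r => (hle r).trans inf_le_right (Filter.mem_principal_self _)⟩

theorem pbreve_eq_Delta_iff {p : Ultrafilter X} {Y : Set X} :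
    pbreve p = Delta p Y ↔ ∀ q ∈ pbreve p, Y ∈ q := by
  refine ⟨fun h q hq => (h ▸ hq).2.1, fun h => ?_⟩
  ext q
  exact ⟨fun hq => ⟨hq.1, h q hq, hq.2⟩, fun hq => ⟨hq.1, hq.2.2⟩⟩

section Displacement

variable {f : X → X} {r : ℝ}

theorem par_map_of_dist_le (p : Ultrafilter X) (hr : 0 ≤ r) (hf : ∀ x, dist (f x) x ≤ r) :
    Par (p.map f) p :=
  ⟨r, hr, fun _ hQ => Ultrafilter.mem_map.2 <| Filter.mem_of_superset hQ fun x hx =>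
    mem_preimage.2 <| mem_iUnion₂.2 ⟨x, hx, mem_closedBall.2 (hf x)⟩⟩

theorem map_mem_sharp_of_dist_le {p : Ultrafilter X} (hp : p ∈ sharp X)
    (hf : ∀ x, dist (f x) x ≤ r) : p.map f ∈ sharp X := by
  intro P hP hb
  refine hp _ hP ((hb.cthickening (δ := r)).subset ?_)
  intro x hx
  exact ballU_subset_cthickening P r
    (mem_iUnion₂.2 ⟨f x, hx, mem_closedBall'.2 (hf x)⟩)

theorem map_mem_pbreve_of_dist_le {p : Ultrafilter X} (hp : p ∈ sharp X) (hr : 0 ≤ r)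
    (hf : ∀ x, dist (f x) x ≤ r) : p.map f ∈ pbreve p :=
  ⟨map_mem_sharp_of_dist_le hp hf, par_map_of_dist_le p hr hf⟩

end Displacement

theorem thick_of_forall_mem_pbreve {p : Ultrafilter X} (hp : p ∈ sharp X) {Y : Set X}
    (hY : ∀ q ∈ pbreve p, Y ∈ q) : Thick Y := by
  intro r hr
  by_contra! hno
  have hmove : ∀ x : X, ∃ z, dist z x ≤ r ∧ z ∉ Y := by
    intro x
    by_cases hx : x ∈ Y
    · obtain ⟨z, hz, hzY⟩ := not_subset.1 (hno x hx)
      exact ⟨z, mem_closedBall.1 hz, hzY⟩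
    · exact ⟨x, by simpa using hr, hx⟩
  choose f hf hfY using hmove
  have hpre : f ⁻¹' Y ∈ p := hY _ (map_mem_pbreve_of_dist_le hp hr hf)
  have hempty : f ⁻¹' Y = ∅ := eq_empty_of_forall_notMem hfY
  exact Ultrafilter.empty_notMem (hempty ▸ hpre)

theorem stmt8 (hX : ¬ Bornology.IsBounded (Set.univ : Set X)) (Y : Set X) :
    Thick Y ↔ ∃ p ∈ sharp X, pbreve p = Delta p Y := by
  refine ⟨fun hY => ?_, fun ⟨p, hp, heq⟩ =>
    thick_of_forall_mem_pbreve hp (pbreve_eq_Delta_iff.1 heq)⟩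
  obtain ⟨p, hp, hcore⟩ := exists_mem_sharp_forall_mem_of_antitone (ballCore_antitone Y)
    (hY.not_isBounded_ballCore hX)
  refine ⟨p, hp, pbreve_eq_Delta_iff.2 fun q ⟨_, r, _, hpar⟩ => ?_⟩
  exact Filter.mem_of_superset (hpar _ (hcore r)) (ballU_ballCore_subset Y r)
end
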